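/- arXiv:2111.05816 — 2 statements merged into one kernel-verified Lean document; each statement's English description precedes it below -/
import Mathlib

section
/- Canonical paths bound: Let G = (V,E) be a connected finite graph with positive edge weighting u, and for each pair x,y ∈ V fix a path Γ_{x,y} in G from x to y. Then the spectral gap of the reversible random walk on (G,u) satisfies Γ_u ≥ min over edges e of [ (u(e)/u(V)) / Σ_{x,y: e ∈ Γ_{x,y}} π_u(x)π_u(y)|Γ_{x,y}| ]. -/
/-!
Up to the factor `u(V) / 2`, the variance of `f` is `Σ_{x,y} π(x) π(y) (f x - f y)²`. By
Cauchy–Schwarz along `Γ x y`, each `(f x - f y)²` is at most `|Γ x y|` times the sum of the squared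
increments of `f` over the edges of `Γ x y`. Exchanging the order of summation, the increment over an
edge `e` gets the weight `congestion(e) = Σ_{x,y : e ∈ Γ x y} π(x) π(y) |Γ x y|`, and
`c · congestion(e) ≤ u(e) / u(V)` for the minimum `c` of the theorem. Hence `c · Var(f) ≤ E(f)` for
every `f`, and the variational characterisation of the gap gives `c ≤ Γ_u`.
-/

open Finset
open scoped Classical

/-- Dirichlet form (up to normalisation `1/u(V)`). -/
noncomputable def dirichletForm {V : Type*} [Fintype V] (u : V → V → ℝ) (f : V → ℝ) : ℝ :=
  (∑ x, ∑ y, u x y * (f x - f y) ^ 2) / 2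

/-- Variance under `π_u` (up to normalisation `1/u(V)`). -/
noncomputable def varForm {V : Type*} [Fintype V] (u : V → V → ℝ) (f : V → ℝ) : ℝ :=
  ∑ x, (∑ y, u x y) * (f x - (∑ z, (∑ y, u z y) * f z) / (∑ a, ∑ b, u a b)) ^ 2

/-- Spectral gap via the variational characterisation. -/
noncomputable def specGap {V : Type*} [Fintype V] (u : V → V → ℝ) : ℝ :=
  sInf {r : ℝ | ∃ f : V → ℝ, (∃ x y, f x ≠ f y) ∧ r = dirichletForm u f / varForm u f}

/-- Stationary distribution `π_u(x) = u(x)/u(V)`. -/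
noncomputable def piPt {V : Type*} [Fintype V] (u : V → V → ℝ) (x : V) : ℝ :=
  (∑ y, u x y) / (∑ a, ∑ b, u a b)

theorem List.sq_sum_le_length_mul_sum_sq (l : List ℝ) :
    l.sum ^ 2 ≤ l.length * (l.map (· ^ 2)).sum := by
  have := sq_sum_le_card_mul_sum_sq (s := univ) (f := fun i : Fin l.length => l[i.1])
  rwa [Fin.sum_univ_getElem, Fin.sum_univ_fun_getElem l (· ^ 2), card_univ, Fintype.card_fin]
    at this

theorem sum_mul_sq_sub_sum_mul_eq {ι : Type*} [Fintype ι] (p f : ι → ℝ) (hp : ∑ i, p i = 1) :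
    ∑ i, p i * (f i - ∑ j, p j * f j) ^ 2 = (∑ i, ∑ j, p i * p j * (f i - f j) ^ 2) / 2 := by
  have h₁ : ∀ i, ∑ j, p i * p j * (f i - f j) ^ 2 =
      p i * f i ^ 2 * ∑ j, p j - 2 * (p i * f i) * ∑ j, p j * f j + p i * ∑ j, p j * f j ^ 2 := by
    intro i
    simp only [mul_sum, ← sum_sub_distrib, ← sum_add_distrib]
    exact sum_congr rfl fun j _ => by ring
  have h₂ : ∀ i, p i * (f i - ∑ j, p j * f j) ^ 2 =
      p i * f i ^ 2 - 2 * (p i * f i) * ∑ j, p j * f j + p i * (∑ j, p j * f j) ^ 2 := by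
    intro i; ring
  simp only [h₁, h₂, sum_add_distrib, sum_sub_distrib, ← sum_mul, ← mul_sum, hp]
  ring

theorem sum_sum_sum_sum_comm {α β γ δ M : Type*} [Fintype α] [Fintype β] [Fintype γ] [Fintype δ]
    [AddCommMonoid M] (F : α → β → γ → δ → M) :
    ∑ x, ∑ y, ∑ a, ∑ b, F x y a b = ∑ a, ∑ b, ∑ x, ∑ y, F x y a b := by
  simp only [← Fintype.sum_prod_type']
  exact Fintype.sum_equiv ((Equiv.prodAssoc _ _ _).symm.trans
    ((Equiv.prodComm _ _).trans (Equiv.prodAssoc _ _ _))) _ _ fun _ => rfl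

namespace SimpleGraph.Walk

variable {V : Type*} {G : SimpleGraph V}

theorem sub_eq_sum_darts {R : Type*} [AddCommGroup R] (f : V → R) {x y : V} (w : G.Walk x y) :
    f x - f y = (w.darts.map fun d => f d.fst - f d.snd).sum := by
  induction w with
  | nil => simp
  | cons _ _ ih => simp [← ih]

theorem sq_sub_le_length_mul_sum_darts (f : V → ℝ) {x y : V} (w : G.Walk x y) :
    (f x - f y) ^ 2 ≤ w.length * (w.darts.map fun d => (f d.fst - f d.snd) ^ 2).sum := by
  simpa [sub_eq_sum_darts f w, List.map_map, Function.comp_def] using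
    (w.darts.map fun d => f d.fst - f d.snd).sq_sum_le_length_mul_sum_sq

variable [Fintype V] [DecidableEq V]

theorem IsTrail.sum_darts_le_sum_of_mem_edges {x y : V} {w : G.Walk x y}
    (hw : w.IsTrail) (g : V → V → ℝ) (hg : ∀ a b, 0 ≤ g a b) :
    (w.darts.map fun d => g d.fst d.snd).sum ≤
      ∑ a, ∑ b, if s(a, b) ∈ w.edges then g a b else 0 := by
  have hnodup : (w.darts.map Dart.toProd).Nodup := by
    have h := hw.edges_nodup
    rw [edges_eq_map_darts] at h
    refine List.Nodup.of_map (fun q => s(q.1, q.2)) ?_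
    rw [List.map_map]
    exact h
  have hmap : (w.darts.map fun d => g d.fst d.snd) =
      (w.darts.map Dart.toProd).map fun q => g q.1 q.2 := by
    rw [List.map_map]; rfl
  rw [hmap, ← List.sum_toFinset _ hnodup, ← Fintype.sum_prod_type', ← Finset.sum_filter]
  refine Finset.sum_le_sum_of_subset_of_nonneg ?_ fun q _ _ => hg q.1 q.2
  intro q hq
  obtain ⟨d, hd, rfl⟩ := List.mem_map.mp (List.mem_toFinset.mp hq)
  rw [Finset.mem_filter, edges_eq_map_darts]
  exact ⟨mem_univ _, List.mem_map_of_mem hd⟩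

theorem sq_sub_le_length_mul_sum_edges (f : V → ℝ) {x y : V} (w : G.Walk x y) :
    (f x - f y) ^ 2 ≤
      w.length * ∑ a, ∑ b, if s(a, b) ∈ w.edges then (f a - f b) ^ 2 else 0 := by
  calc (f x - f y) ^ 2
      ≤ w.bypass.length * (w.bypass.darts.map fun d => (f d.fst - f d.snd) ^ 2).sum :=
        sq_sub_le_length_mul_sum_darts f w.bypass
    _ ≤ w.length * ∑ a, ∑ b, if s(a, b) ∈ w.bypass.edges then (f a - f b) ^ 2 else 0 := by
        -- the darts of the path `w.bypass` are distinct, so no ordered pair is counted twice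
        gcongr
        · exact List.sum_nonneg fun _ h => by obtain ⟨_, _, rfl⟩ := List.mem_map.mp h; positivity
        · exact_mod_cast w.length_bypass_le_length
        · exact w.bypass_isPath.isTrail.sum_darts_le_sum_of_mem_edges (fun a b => (f a - f b) ^ 2)
            fun _ _ => sq_nonneg _
    _ ≤ w.length * ∑ a, ∑ b, if s(a, b) ∈ w.edges then (f a - f b) ^ 2 else 0 := by
        gcongr with a _ b _
        split_ifs with h₁ h₂
        exacts [le_rfl, absurd (w.edges_bypass_subset_edges h₁) h₂, sq_nonneg _, le_rfl]

end SimpleGraph.Walk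

section

variable {V : Type*} [Fintype V]

theorem piPt_nonneg {u : V → V → ℝ} (hnn : ∀ x y, 0 ≤ u x y) (x : V) : 0 ≤ piPt u x :=
  div_nonneg (sum_nonneg fun y _ => hnn x y) (sum_nonneg fun a _ => sum_nonneg fun b _ => hnn a b)

theorem varForm_eq {u : V → V → ℝ} (hW : ∑ a, ∑ b, u a b ≠ 0) (f : V → ℝ) :
    varForm u f = (∑ a, ∑ b, u a b) / 2 *
      ∑ x, ∑ y, piPt u x * piPt u y * (f x - f y) ^ 2 := by
  have hpi : ∑ x, piPt u x = 1 := by simp only [piPt, ← sum_div, div_self hW]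
  have hmean : (∑ z, (∑ y, u z y) * f z) / (∑ a, ∑ b, u a b) = ∑ z, piPt u z * f z := by
    rw [sum_div]
    simp only [piPt, div_mul_eq_mul_div]
  calc varForm u f = (∑ a, ∑ b, u a b) * ∑ x, piPt u x * (f x - ∑ z, piPt u z * f z) ^ 2 := by
        rw [mul_sum, varForm, hmean]
        refine sum_congr rfl fun x _ => ?_
        rw [piPt, ← mul_assoc, mul_div_cancel₀ _ hW]
    _ = _ := by rw [sum_mul_sq_sub_sum_mul_eq _ f hpi]; ring

theorem varForm_pos {u : V → V → ℝ} (hdeg : ∀ x, 0 < ∑ y, u x y) {f : V → ℝ} {x y : V}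
    (hxy : f x ≠ f y) : 0 < varForm u f := by
  have hW : 0 < ∑ a, ∑ b, u a b := sum_pos (fun a _ => hdeg a) ⟨x, mem_univ x⟩
  have hpi : ∀ z, 0 < piPt u z := fun z => div_pos (hdeg z) hW
  rw [varForm_eq hW.ne']
  refine mul_pos (half_pos hW) (sum_pos' (fun a _ => sum_nonneg fun b _ => ?_) ⟨x, mem_univ x, ?_⟩)
  · exact mul_nonneg (mul_nonneg (hpi a).le (hpi b).le) (sq_nonneg _)
  refine sum_pos' (fun b _ => ?_) ⟨y, mem_univ y, ?_⟩
  · exact mul_nonneg (mul_nonneg (hpi x).le (hpi b).le) (sq_nonneg _)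
  · exact mul_pos (mul_pos (hpi x) (hpi y)) (sq_pos_of_ne_zero (sub_ne_zero.2 hxy))

theorem specGap_nonneg {u : V → V → ℝ} (hnn : ∀ x y, 0 ≤ u x y) : 0 ≤ specGap u := by
  refine Real.sInf_nonneg ?_
  rintro r ⟨f, -, rfl⟩
  have hdeg : ∀ x, 0 ≤ ∑ y, u x y := fun x => sum_nonneg fun y _ => hnn x y
  unfold dirichletForm varForm
  exact div_nonneg (div_nonneg (sum_nonneg fun x _ => sum_nonneg fun y _ =>
    mul_nonneg (hnn x y) (sq_nonneg _)) zero_le_two)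
    (sum_nonneg fun x _ => mul_nonneg (hdeg x) (sq_nonneg _))

theorem le_specGap [Nontrivial V] {u : V → V → ℝ} {c : ℝ}
    (hvar : ∀ f : V → ℝ, (∃ x y, f x ≠ f y) → 0 < varForm u f)
    (hc : ∀ f, c * varForm u f ≤ dirichletForm u f) : c ≤ specGap u := by
  obtain ⟨x, y, hxy⟩ := exists_pair_ne V
  refine le_csInf ⟨_, Pi.single x 1, ⟨x, y, by simp [hxy.symm]⟩, rfl⟩ ?_
  rintro r ⟨f, hf, rfl⟩
  rw [le_div_iff₀ (hvar f hf)]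
  exact hc f

variable [DecidableEq V] {G : SimpleGraph V}

noncomputable def congestion (u : V → V → ℝ) (Γ : ∀ x y : V, G.Walk x y) (a b : V) : ℝ :=
  ∑ x, ∑ y, if s(a, b) ∈ (Γ x y).edges then piPt u x * piPt u y * ((Γ x y).length : ℝ) else 0

theorem congestion_nonneg {u : V → V → ℝ} (hnn : ∀ x y, 0 ≤ u x y) (Γ : ∀ x y : V, G.Walk x y)
    (a b : V) : 0 ≤ congestion u Γ a b :=
  sum_nonneg fun x _ => sum_nonneg fun y _ => by
    split_ifs
    · exact mul_nonneg (mul_nonneg (piPt_nonneg hnn x) (piPt_nonneg hnn y)) (Nat.cast_nonneg _)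
    · exact le_rfl

theorem mul_varForm_le_dirichletForm {u : V → V → ℝ} (hnn : ∀ x y, 0 ≤ u x y)
    (hW : 0 < ∑ a, ∑ b, u a b) (Γ : ∀ x y : V, G.Walk x y) {c : ℝ} (hc : 0 ≤ c)
    (hcong : ∀ a b, c * congestion u Γ a b ≤ u a b / ∑ x, ∑ y, u x y) (f : V → ℝ) :
    c * varForm u f ≤ dirichletForm u f := by
  set W := ∑ a, ∑ b, u a b
  have key : c * ∑ x, ∑ y, piPt u x * piPt u y * (f x - f y) ^ 2 ≤
      ∑ a, ∑ b, u a b / W * (f a - f b) ^ 2 :=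
    calc c * ∑ x, ∑ y, piPt u x * piPt u y * (f x - f y) ^ 2
        ≤ c * ∑ x, ∑ y, piPt u x * piPt u y * ((Γ x y).length *
            ∑ a, ∑ b, if s(a, b) ∈ (Γ x y).edges then (f a - f b) ^ 2 else 0) := by
          gcongr with x _ y _
          · exact mul_nonneg (piPt_nonneg hnn x) (piPt_nonneg hnn y)
          · exact (Γ x y).sq_sub_le_length_mul_sum_edges f
      _ = ∑ a, ∑ b, c * congestion u Γ a b * (f a - f b) ^ 2 := by
          simp only [congestion, mul_sum, sum_mul, mul_ite, ite_mul, mul_zero, zero_mul]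
          rw [sum_sum_sum_sum_comm]
          refine sum_congr rfl fun a _ => sum_congr rfl fun b _ =>
            sum_congr rfl fun x _ => sum_congr rfl fun y _ => ?_
          split_ifs <;> ring
      _ ≤ ∑ a, ∑ b, u a b / W * (f a - f b) ^ 2 := by
          gcongr with a _ b _
          exact hcong a b
  rw [varForm_eq hW.ne', dirichletForm, mul_left_comm]
  calc W / 2 * (c * ∑ x, ∑ y, piPt u x * piPt u y * (f x - f y) ^ 2)
      ≤ W / 2 * ∑ a, ∑ b, u a b / W * (f a - f b) ^ 2 := by gcongr
    _ = (∑ a, ∑ b, u a b * (f a - f b) ^ 2) / 2 := by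
        simp only [div_mul_eq_mul_div, ← sum_div]
        field_simp

theorem congestion_eq_zero_of_not_adj (u : V → V → ℝ) (Γ : ∀ x y : V, G.Walk x y) {a b : V}
    (hab : ¬ G.Adj a b) : congestion u Γ a b = 0 :=
  sum_eq_zero fun x _ => sum_eq_zero fun y _ => if_neg fun h => hab ((Γ x y).adj_of_mem_edges h)

noncomputable def canonicalPathsBound (u : V → V → ℝ) (Γ : ∀ x y : V, G.Walk x y) : ℝ :=
  sInf {r : ℝ | ∃ a b, G.Adj a b ∧ r = (u a b / ∑ x, ∑ y, u x y) / congestion u Γ a b}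

theorem canonicalPathsBound_set_nonneg {u : V → V → ℝ} (hnn : ∀ x y, 0 ≤ u x y)
    (Γ : ∀ x y : V, G.Walk x y) :
    ∀ r ∈ {r : ℝ | ∃ a b, G.Adj a b ∧ r = (u a b / ∑ x, ∑ y, u x y) / congestion u Γ a b},
      0 ≤ r := by
  rintro r ⟨a, b, -, rfl⟩
  exact div_nonneg (div_nonneg (hnn a b) (sum_nonneg fun x _ => sum_nonneg fun y _ => hnn x y))
    (congestion_nonneg hnn Γ a b)

theorem canonicalPathsBound_nonneg {u : V → V → ℝ} (hnn : ∀ x y, 0 ≤ u x y)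
    (Γ : ∀ x y : V, G.Walk x y) : 0 ≤ canonicalPathsBound u Γ :=
  Real.sInf_nonneg (canonicalPathsBound_set_nonneg hnn Γ)

theorem canonicalPathsBound_mul_congestion_le {u : V → V → ℝ} (hnn : ∀ x y, 0 ≤ u x y)
    (Γ : ∀ x y : V, G.Walk x y) (a b : V) :
    canonicalPathsBound u Γ * congestion u Γ a b ≤ u a b / ∑ x, ∑ y, u x y := by
  have hu : 0 ≤ u a b / ∑ x, ∑ y, u x y :=
    div_nonneg (hnn a b) (sum_nonneg fun x _ => sum_nonneg fun y _ => hnn x y)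
  by_cases hab : G.Adj a b
  · rcases (congestion_nonneg hnn Γ a b).eq_or_lt with h₀ | hpos
    · rwa [← h₀, mul_zero]
    · rw [← le_div_iff₀ hpos]
      exact csInf_le ⟨0, canonicalPathsBound_set_nonneg hnn Γ⟩ ⟨a, b, hab, rfl⟩
  · rwa [congestion_eq_zero_of_not_adj u Γ hab, mul_zero]

end

theorem canonical_paths_bound_general {V : Type*} [Fintype V] [DecidableEq V]
    (G : SimpleGraph V) (u : V → V → ℝ)
    (hsupp : ∀ x y, 0 < u x y ↔ G.Adj x y) (hnn : ∀ x y, 0 ≤ u x y)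
    (Γ : ∀ x y : V, G.Walk x y) :
    sInf {r : ℝ | ∃ a b, G.Adj a b ∧
        r = (u a b / (∑ x, ∑ y, u x y)) /
          (∑ x, ∑ y, if s(a, b) ∈ (Γ x y).edges
            then piPt u x * piPt u y * ((Γ x y).length : ℝ) else 0)}
      ≤ specGap u := by
  show canonicalPathsBound u Γ ≤ specGap u
  rcases subsingleton_or_nontrivial V with hV | hV
  · have hadj : ∀ a b, ¬ G.Adj a b := fun a b h => h.ne (Subsingleton.elim a b)
    simpa [canonicalPathsBound, hadj] using specGap_nonneg hnn
  have hdeg : ∀ x, 0 < ∑ y, u x y := fun x => by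
    obtain ⟨y, hy⟩ := exists_ne x
    exact sum_pos' (fun z _ => hnn x z)
      ⟨_, mem_univ _, (hsupp _ _).2 ((Γ x y).adj_snd (SimpleGraph.Walk.not_nil_of_ne hy.symm))⟩
  have hW : 0 < ∑ a, ∑ b, u a b := sum_pos (fun a _ => hdeg a) univ_nonempty
  exact le_specGap (fun f ⟨x, y, hxy⟩ => varForm_pos hdeg hxy)
    (mul_varForm_le_dirichletForm hnn hW Γ (canonicalPathsBound_nonneg hnn Γ)
      (canonicalPathsBound_mul_congestion_le hnn Γ))

/-- The canonical paths bound: given, for each pair `x, y`, a path `Γ x y` from `x` to `y` in the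
connected weighted graph `(G, u)`, the spectral gap is at least
`min_e (u(e)/u(V)) / Σ_{x,y : e ∈ Γ_{x,y}} π_u(x) π_u(y) |Γ_{x,y}|`. -/
theorem canonical_paths_bound {V : Type*} [Fintype V] [DecidableEq V]
    (G : SimpleGraph V) (hconn : G.Connected) (u : V → V → ℝ)
    (hsym : ∀ x y, u x y = u y x)
    (hsupp : ∀ x y, 0 < u x y ↔ G.Adj x y) (hnn : ∀ x y, 0 ≤ u x y)
    (Γ : ∀ x y : V, G.Walk x y) (hΓ : ∀ x y, (Γ x y).IsPath) :
    sInf {r : ℝ | ∃ a b, G.Adj a b ∧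
        r = (u a b / (∑ x, ∑ y, u x y)) /
          (∑ x, ∑ y, if s(a, b) ∈ (Γ x y).edges
            then piPt u x * piPt u y * ((Γ x y).length : ℝ) else 0)}
      ≤ specGap u :=
  canonical_paths_bound_general G u hsupp hnn Γ
end

section
/- Hard direction of the matching-conductance Cheeger inequality: for any finite graph G on at least 2 vertices, Υ*(G) ≤ 16·√(λ*(G)), where λ*(G) is the one-dimensional relaxation value and Υ*(G) is the matching conductance. -/
open Finset
open scoped Classical

/-- Maximum size of a matching among edges of `G` crossing from `S` to its complement. -/
noncomputable def cutMatchNum {V : Type*} [Fintype V] (G : SimpleGraph V) (S : Finset V) : ℕ :=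
  sSup {n : ℕ | ∃ M : Finset (V × V),
    (∀ p ∈ M, p.1 ∈ S ∧ p.2 ∉ S ∧ G.Adj p.1 p.2) ∧
    (∀ p ∈ M, ∀ q ∈ M, p ≠ q → p.1 ≠ q.1 ∧ p.1 ≠ q.2 ∧ p.2 ≠ q.1 ∧ p.2 ≠ q.2) ∧
    M.card = n}

/-- Matching conductance Υ*(G). -/
noncomputable def matchCond {V : Type*} [Fintype V] (G : SimpleGraph V) : ℝ :=
  sInf {r : ℝ | ∃ S : Finset V, S.Nonempty ∧ 2 * S.card ≤ Fintype.card V ∧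
    r = (cutMatchNum G S : ℝ) / S.card}

/-- The one-dimensional relaxation value `λ*(G)`: the infimum over pairs `(f, g)` with
`Σ f = 0`, `f ≢ 0`, `g ≥ 0`, and `g(u)+g(v) ≥ (f(u)−f(v))²` on edges, of
`(Σ g)/(Σ f²)`. -/
noncomputable def oneDimGap {V : Type*} [Fintype V] (G : SimpleGraph V) : ℝ :=
  sInf {r : ℝ | ∃ f g : V → ℝ, (∑ u, f u) = 0 ∧ (∃ u, f u ≠ 0) ∧
    (∀ u, 0 ≤ g u) ∧ (∀ u v, G.Adj u v → (f u - f v) ^ 2 ≤ g u + g v) ∧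
    r = (∑ u, g u) / (∑ u, f u ^ 2)}

/-!
Centre an optimal pair `(f, g)` at a median of `f` and keep the larger of the positive and
negative parts: this gives `h ≥ 0`, supported on at most half of the vertices, with
`∑ h² ≥ ∑ f² / 2` and still `(h u - h v)² ≤ g u + g v` on edges. Sweep the level sets
`{u | t ≤ h u²}`. An edge `uv` crossing the cut at level `t` forces `h u² - h v²` to span the gap
below `t`, and since `(h u - h v)² ≤ g u + g v` that gap is controlled by `g` at one endpoint; a
matching crossing the cut therefore injects into a set of vertices "charged" at level `t`.
Summing over levels with weight the gap below each level, every vertex is charged at most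
`O(√g · h + g)` in total, so by Cauchy–Schwarz the weighted sum of cut matchings is at most
`3 √(8 ∑ g) √(∑ h²) + 8 ∑ g`, while the weighted sum of the sizes is `∑ h²`. Some level therefore
has matching conductance at most `12 √ρ + 16 ρ` with `ρ = ∑ g / ∑ f²`; together with `Υ* ≤ 1`
this is at most `16 √ρ`.
-/
lemma sweep_edge_dichotomy {a b ga gb s t : ℝ} (ha : 0 ≤ a) (hst : s < t)
    (hta : t ≤ a ^ 2) (hbs : b ^ 2 ≤ s) (hedge : (a - b) ^ 2 ≤ ga + gb) :
    (s < a ^ 2 ∧ (a ^ 2 - s) ^ 2 ≤ 8 * ga * a ^ 2) ∨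
      (b ^ 2 < t ∧ (t - b ^ 2) ^ 2 ≤ 8 * gb * t) := by
  have hba : b ≤ a := abs_le_of_sq_le_sq' (by linarith) ha |>.2
  rcases le_total gb ga with hg | hg
  · refine Or.inl ⟨by linarith, ?_⟩
    calc (a ^ 2 - s) ^ 2 ≤ ((a - b) * (2 * a)) ^ 2 := by
          apply pow_le_pow_left₀ (by linarith); nlinarith
      _ = 4 * a ^ 2 * (a - b) ^ 2 := by ring
      _ ≤ 4 * a ^ 2 * (2 * ga) := by gcongr; linarith
      _ = 8 * ga * a ^ 2 := by ring
  · refine Or.inr ⟨by linarith, ?_⟩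
    have hsqrt : √t ^ 2 = t := Real.sq_sqrt (by nlinarith)
    have hbt : |b| ≤ √t := Real.abs_le_sqrt (by linarith)
    have hta' : √t ≤ a := Real.sqrt_le_iff.2 ⟨ha, hta⟩
    calc (t - b ^ 2) ^ 2 ≤ ((a - b) * (2 * √t)) ^ 2 := by
          apply pow_le_pow_left₀ (by linarith)
          nlinarith [abs_le.1 hbt]
      _ = 4 * t * (a - b) ^ 2 := by rw [mul_pow, mul_pow, hsqrt]; ring
      _ ≤ 4 * t * (2 * gb) := by gcongr <;> nlinarith
      _ = 8 * gb * t := by ring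

lemma sub_le_sqrt_mul_of_sq_sub_le {x p c : ℝ} (hx : 0 ≤ x) (h : (x ^ 2 - p) ^ 2 ≤ c * x ^ 2) :
    x ^ 2 - √c * x ≤ p := by
  have := Real.le_sqrt_of_sq_le h
  rw [Real.sqrt_mul' c (sq_nonneg x), Real.sqrt_sq hx] at this
  linarith

lemma le_add_sqrt_sq_of_sq_sub_le {x t c : ℝ} (hx : 0 ≤ x) (ht : 0 ≤ t) (hc : 0 ≤ c)
    (h : (t - x ^ 2) ^ 2 ≤ c * t) : t ≤ (x + √c) ^ 2 := by
  have hsub : t - x ^ 2 ≤ √c * √t := by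
    rw [← Real.sqrt_mul hc]; exact Real.le_sqrt_of_sq_le h
  have ht2 : √t ^ 2 = t := Real.sq_sqrt ht
  have hroot : √t ≤ x + √c := by
    by_contra! hlt
    nlinarith [Real.sqrt_nonneg c, Real.sqrt_nonneg t]
  calc t = √t ^ 2 := ht2.symm
    _ ≤ (x + √c) ^ 2 := pow_le_pow_left₀ (Real.sqrt_nonneg t) hroot 2

lemma le_sixteen_mul_sqrt_of_le_min {x ρ : ℝ} (hρ : 0 ≤ ρ) (h1 : x ≤ 1)
    (h2 : x ≤ 12 * √ρ + 16 * ρ) : x ≤ 16 * √ρ := by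
  have hsq : √ρ ^ 2 = ρ := Real.sq_sqrt hρ
  rcases le_total 1 (16 * √ρ) with hbig | hsmall
  · linarith
  · nlinarith [Real.sqrt_nonneg ρ]

-- The largest element of `L` below `t`, or `0` if there is none.
noncomputable def prevLevel (L : Finset ℝ) (t : ℝ) : ℝ :=
  (insert 0 (L.filter (· < t))).max' (insert_nonempty _ _)

section PrevLevel

variable {L : Finset ℝ} {s t : ℝ}

lemma prevLevel_nonneg : 0 ≤ prevLevel L t :=
  le_max' _ _ (mem_insert_self _ _)

lemma le_prevLevel (hs : s ∈ insert 0 L) (hst : s < t) : s ≤ prevLevel L t := by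
  rcases mem_insert.1 hs with rfl | hs
  · exact prevLevel_nonneg
  · exact le_max' _ _ (mem_insert_of_mem (mem_filter.2 ⟨hs, hst⟩))

lemma prevLevel_lt (ht : 0 < t) : prevLevel L t < t := by
  refine (max'_lt_iff _ _).2 fun y hy => ?_
  rcases mem_insert.1 hy with rfl | hy
  · exact ht
  · exact (mem_filter.1 hy).2

lemma prevLevel_mem : prevLevel L t ∈ insert 0 L :=
  insert_subset_insert _ (filter_subset _ _) (max'_mem _ _)

lemma sum_filter_le_sub_prevLevel_eq (hL : ∀ t ∈ L, 0 < t) {a : ℝ} (ha : a ∈ insert 0 L) :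
    ∑ t ∈ L with t ≤ a, (t - prevLevel L t) = a := by
  induction hF : L.filter (· ≤ a) using Finset.induction_on_max generalizing a with
  | empty =>
    rcases mem_insert.1 ha with rfl | ha
    · simp
    · simpa using (filter_eq_empty_iff.1 hF) ha
  | insert m F hFm ih =>
    have hmF : m ∉ F := fun hm => lt_irrefl m (hFm m hm)
    have hmL : m ∈ L ∧ m ≤ a := mem_filter.1 (hF ▸ mem_insert_self m F)
    have haL : a ∈ L := (mem_insert.1 ha).resolve_left fun h0 =>
      (hL m hmL.1).not_ge (h0 ▸ hmL.2)
    have ham : a = m := by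
      rcases mem_insert.1 (hF ▸ mem_filter.2 ⟨haL, le_rfl⟩ : a ∈ insert m F) with h | h
      · exact h
      · exact absurd hmL.2 (hFm a h).not_ge
    subst ham
    have hprev : L.filter (· ≤ prevLevel L a) = F := by
      rw [← erase_insert hmF, ← hF]
      ext t
      simp only [mem_filter, mem_erase]
      constructor
      · rintro ⟨htL, hta⟩
        exact ⟨(hta.trans_lt (prevLevel_lt (hL a haL))).ne, htL,
          hta.trans (prevLevel_lt (hL a haL)).le⟩
      · rintro ⟨hne, htL, hta⟩
        exact ⟨htL, le_prevLevel (mem_insert_of_mem htL) (lt_of_le_of_ne hta hne)⟩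
    rw [sum_insert hmF, ih prevLevel_mem hprev]
    ring

lemma sum_sub_prevLevel_le {F : Finset ℝ} (hFL : F ⊆ L) {a x : ℝ} (hxa : x ≤ a)
    (hF : ∀ t ∈ F, t ≤ a ∧ x ≤ prevLevel L t) : ∑ t ∈ F, (t - prevLevel L t) ≤ a - x := by
  induction F using Finset.induction_on_max generalizing a with
  | empty => simpa using hxa
  | insert m F hFm ih =>
    have hmF : m ∉ F := fun hm => lt_irrefl m (hFm m hm)
    obtain ⟨hma, hxm⟩ := hF m (mem_insert_self m F)
    have hrest : ∑ t ∈ F, (t - prevLevel L t) ≤ prevLevel L m - x :=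
      ih ((subset_insert m F).trans hFL) hxm fun t ht =>
        ⟨le_prevLevel (mem_insert_of_mem (hFL (mem_insert_of_mem ht))) (hFm t ht),
          (hF t (mem_insert_of_mem ht)).2⟩
    rw [sum_insert hmF]
    linarith

end PrevLevel

lemma card_le_card_add_card_of_injOn {α : Type*} {M : Finset (α × α)} {A B : Finset α}
    (hfst : Set.InjOn Prod.fst (M : Set (α × α))) (hsnd : Set.InjOn Prod.snd (M : Set (α × α)))
    (hAB : ∀ p ∈ M, p.1 ∈ A ∨ p.2 ∈ B) : M.card ≤ A.card + B.card := by
  rw [← card_filter_add_card_filter_not (fun p : α × α => p.1 ∈ A)]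
  gcongr
  · exact card_le_card_of_injOn Prod.fst (fun p hp => (mem_filter.1 hp).2)
      (hfst.mono (filter_subset _ _))
  · exact card_le_card_of_injOn Prod.snd
      (fun p hp => (hAB p (mem_filter.1 hp).1).resolve_left (mem_filter.1 hp).2)
      (hsnd.mono (filter_subset _ _))

section Matching

variable {V : Type*} [Fintype V] (G : SimpleGraph V)

lemma cutMatchNum_le {S : Finset V} {K : ℕ}
    (h : ∀ M : Finset (V × V), (∀ p ∈ M, p.1 ∈ S ∧ p.2 ∉ S ∧ G.Adj p.1 p.2) →
      (∀ p ∈ M, ∀ q ∈ M, p ≠ q → p.1 ≠ q.1 ∧ p.1 ≠ q.2 ∧ p.2 ≠ q.1 ∧ p.2 ≠ q.2) →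
      M.card ≤ K) :
    cutMatchNum G S ≤ K :=
  csSup_le ⟨0, ∅, by simp, by simp, rfl⟩ fun _ ⟨M, hcross, hdisj, hcard⟩ => hcard ▸ h M hcross hdisj

lemma cutMatchNum_le_card (S : Finset V) : cutMatchNum G S ≤ S.card :=
  cutMatchNum_le G fun _ hcross hdisj =>
    card_le_card_of_injOn Prod.fst (fun p hp => (hcross p hp).1)
      fun p hp q hq hpq => by_contra fun hne => (hdisj p hp q hq hne).1 hpq

lemma matchCond_le_div {S : Finset V} (hS : S.Nonempty) (hcard : 2 * S.card ≤ Fintype.card V) :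
    matchCond G ≤ (cutMatchNum G S : ℝ) / S.card :=
  csInf_le ⟨0, fun _ ⟨_, _, _, hr⟩ => hr ▸ by positivity⟩ ⟨S, hS, hcard, rfl⟩

lemma matchCond_le_one : matchCond G ≤ 1 := by
  rcases Set.eq_empty_or_nonempty {r : ℝ | ∃ S : Finset V, S.Nonempty ∧
      2 * S.card ≤ Fintype.card V ∧ r = (cutMatchNum G S : ℝ) / S.card} with
    h | ⟨_, S, hS, hcard, rfl⟩
  · simp [matchCond, h]
  · exact (matchCond_le_div G hS hcard).trans
      (div_le_one_of_le₀ (by exact_mod_cast cutMatchNum_le_card G S) (Nat.cast_nonneg _))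

end Matching

lemma exists_median {V : Type*} [Fintype V] [Nonempty V] (f : V → ℝ) :
    ∃ M : ℝ, 2 * #{u | M < f u} ≤ Fintype.card V ∧ 2 * #{u | f u < M} ≤ Fintype.card V := by
  set T : Finset V := {u | 2 * #{v | f v < f u} ≤ Fintype.card V}
  obtain ⟨u₀, -, hu₀⟩ := univ.exists_min_image f univ_nonempty
  have hu₀T : u₀ ∈ T := by
    simp [T, filter_eq_empty_iff.2 fun v _ => not_lt.2 (hu₀ v (mem_univ v))]
  obtain ⟨m, hmT, hmax⟩ := T.exists_max_image f ⟨u₀, hu₀T⟩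
  refine ⟨f m, ?_, (mem_filter.1 hmT).2⟩
  by_contra! hlarge
  obtain ⟨w, hwA, hwmin⟩ := (univ.filter (f m < f ·)).exists_min_image f
    (card_pos.1 (by omega))
  have hwT : w ∉ T := fun hw => (hmax w hw).not_gt (mem_filter.1 hwA).2
  have hsub : univ.filter (f · < f w) ⊆ univ.filter (¬ f m < f ·) := fun v hv =>
    mem_filter.2 ⟨mem_univ v, fun hmv =>
      (mem_filter.1 hv).2.not_ge (hwmin v (mem_filter.2 ⟨mem_univ v, hmv⟩))⟩
  have hsplit := card_filter_add_card_filter_not (s := univ) (f m < f ·)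
  rw [card_univ] at hsplit
  exact hwT (mem_filter.2 ⟨mem_univ w, by have := card_le_card hsub; omega⟩)

lemma sum_sq_le_sum_sq_sub_const {ι : Type*} (s : Finset ι) {f : ι → ℝ}
    (hf : ∑ i ∈ s, f i = 0) (c : ℝ) : ∑ i ∈ s, f i ^ 2 ≤ ∑ i ∈ s, (f i - c) ^ 2 := by
  have hexpand : ∑ i ∈ s, (f i - c) ^ 2 = ∑ i ∈ s, f i ^ 2 + s.card * c ^ 2 := by
    simp only [sub_sq, sum_add_distrib, sum_sub_distrib, ← sum_mul, ← mul_sum, hf, sum_const,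
      nsmul_eq_mul]
    ring
  rw [hexpand]
  have : 0 ≤ (s.card : ℝ) * c ^ 2 := by positivity
  linarith

lemma max_zero_sq_add_max_zero_neg_sq (a : ℝ) : max a 0 ^ 2 + max (-a) 0 ^ 2 = a ^ 2 := by
  rcases le_total a 0 with h | h
  · rw [max_eq_right h, max_eq_left (neg_nonneg.2 h)]; ring
  · rw [max_eq_left h, max_eq_right (neg_nonpos.2 h)]; ring

lemma max_zero_ne_zero_iff {a : ℝ} : max a 0 ≠ 0 ↔ 0 < a := by
  rcases le_or_gt a 0 with h | h
  · simp [h]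
  · simp [max_eq_left h.le, h, h.ne']

section EdgeCharge

variable {V : Type*} (G : SimpleGraph V)

def IsEdgeCharge (f g : V → ℝ) : Prop :=
  ∀ u v, G.Adj u v → (f u - f v) ^ 2 ≤ g u + g v

variable {G} {f g : V → ℝ}

lemma IsEdgeCharge.of_sq_sub_le (hf : IsEdgeCharge G f g) {f' : V → ℝ}
    (h : ∀ u v, (f' u - f' v) ^ 2 ≤ (f u - f v) ^ 2) : IsEdgeCharge G f' g :=
  fun u v huv => (h u v).trans (hf u v huv)

lemma IsEdgeCharge.max_zero (hf : IsEdgeCharge G f g) :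
    IsEdgeCharge G (fun u => max (f u) 0) g :=
  hf.of_sq_sub_le fun _ _ => sq_le_sq.2 (abs_max_sub_max_le_abs _ _ _)

variable [Fintype V]

lemma exists_nonneg_of_max_zero {φ : V → ℝ} (hφ : IsEdgeCharge G φ g)
    (hsupp : 2 * #{u | 0 < φ u} ≤ Fintype.card V) {B : ℝ}
    (hB : B ≤ 2 * ∑ u, max (φ u) 0 ^ 2) :
    ∃ h : V → ℝ, (∀ u, 0 ≤ h u) ∧ 2 * #{u | h u ≠ 0} ≤ Fintype.card V ∧
      B ≤ 2 * ∑ u, h u ^ 2 ∧ IsEdgeCharge G h g := by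
  refine ⟨fun u => max (φ u) 0, fun u => le_max_right _ _, ?_, hB, hφ.max_zero⟩
  simpa only [max_zero_ne_zero_iff] using hsupp

-- `h` is the positive or the negative part of `f - M` for a median `M`, whichever is larger.
lemma exists_nonneg_of_sum_eq_zero [Nonempty V] (hsum : ∑ u, f u = 0) (hf : IsEdgeCharge G f g) :
    ∃ h : V → ℝ, (∀ u, 0 ≤ h u) ∧ 2 * #{u | h u ≠ 0} ≤ Fintype.card V ∧
      ∑ u, f u ^ 2 ≤ 2 * ∑ u, h u ^ 2 ∧ IsEdgeCharge G h g := by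
  obtain ⟨M, habove, hbelow⟩ := exists_median f
  have hsplit : ∑ u, f u ^ 2 ≤ ∑ u, max (f u - M) 0 ^ 2 + ∑ u, max (M - f u) 0 ^ 2 := by
    rw [← sum_add_distrib]
    refine (sum_sq_le_sum_sq_sub_const univ hsum M).trans_eq (sum_congr rfl fun u _ => ?_)
    rw [← max_zero_sq_add_max_zero_neg_sq (f u - M), neg_sub]
  rcases le_total (∑ u, max (M - f u) 0 ^ 2) (∑ u, max (f u - M) 0 ^ 2) with hle | hle
  · exact exists_nonneg_of_max_zero (φ := fun u => f u - M)
      (hf.of_sq_sub_le fun _ _ => le_of_eq (by ring)) (by simpa only [sub_pos] using habove)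
      (by linarith)
  · exact exists_nonneg_of_max_zero (φ := fun u => M - f u)
      (hf.of_sq_sub_le fun _ _ => le_of_eq (by ring)) (by simpa only [sub_pos] using hbelow)
      (by linarith)

end EdgeCharge

lemma sum_card_filter_mul_eq {ι α : Type*} [Fintype α] (L : Finset ι) (P : ι → α → Prop)
    [∀ t u, Decidable (P t u)] (w : ι → ℝ) :
    ∑ t ∈ L, (#{u | P t u} : ℝ) * w t = ∑ u, ∑ t ∈ L with P t u, w t := by
  calc _ = ∑ t ∈ L, ∑ u, if P t u then w t else 0 := sum_congr rfl fun t _ => by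
        rw [sum_ite, sum_const_zero, add_zero, sum_const, nsmul_eq_mul]
    _ = _ := by rw [sum_comm]; simp_rw [sum_filter]

section Sweep

variable {V : Type*} [Fintype V] (h g : V → ℝ)

noncomputable def sweepLevels : Finset ℝ := (univ.image fun u => h u ^ 2).filter (0 < ·)

noncomputable def sweepSet (t : ℝ) : Finset V := {u | t ≤ h u ^ 2}

-- Weighting the sweep set at level `t` by the gap below `t` makes `∑ t, #(sweepSet h t) * w t`
-- equal to `∑ u, h u ^ 2`: a discrete form of `∫ #{u | t ≤ h u ^ 2} dt`.
noncomputable def sweepWeight (t : ℝ) : ℝ := t - prevLevel (sweepLevels h) t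

-- A matching edge leaving `sweepSet h t` is charged to its inner endpoint, which then lies in
-- `chargeAbove h g (prevLevel (sweepLevels h) t)`, or to its outer one, in `chargeBelow h g t`.
noncomputable def chargeAbove (s : ℝ) : Finset V :=
  {u | s < h u ^ 2 ∧ (h u ^ 2 - s) ^ 2 ≤ 8 * g u * h u ^ 2}

noncomputable def chargeBelow (t : ℝ) : Finset V :=
  {v | h v ^ 2 < t ∧ (t - h v ^ 2) ^ 2 ≤ 8 * g v * t}

variable {h g}

lemma pos_of_mem_sweepLevels {t : ℝ} (ht : t ∈ sweepLevels h) : 0 < t :=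
  (mem_filter.1 ht).2

lemma sq_mem_insert_sweepLevels (u : V) : h u ^ 2 ∈ insert 0 (sweepLevels h) := by
  rcases (sq_nonneg (h u)).eq_or_lt with h0 | hpos
  · exact h0 ▸ mem_insert_self _ _
  · exact mem_insert_of_mem (mem_filter.2 ⟨mem_image_of_mem _ (mem_univ u), hpos⟩)

lemma sweepLevels_nonempty {u : V} (hu : h u ≠ 0) : (sweepLevels h).Nonempty :=
  ⟨h u ^ 2, mem_filter.2 ⟨mem_image_of_mem _ (mem_univ u), by positivity⟩⟩

lemma sweepSet_nonempty {t : ℝ} (ht : t ∈ sweepLevels h) : (sweepSet h t).Nonempty := by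
  obtain ⟨u, -, hu⟩ := mem_image.1 (mem_filter.1 ht).1
  exact ⟨u, mem_filter.2 ⟨mem_univ u, hu.ge⟩⟩

lemma sweepSet_subset_support {t : ℝ} (ht : 0 < t) :
    sweepSet h t ⊆ ({u | h u ≠ 0} : Finset V) := fun u hu =>
  mem_filter.2 ⟨mem_univ u, fun h0 => by
    have := (mem_filter.1 hu).2
    rw [h0, zero_pow two_ne_zero] at this
    linarith⟩

lemma sweepWeight_pos {t : ℝ} (ht : t ∈ sweepLevels h) : 0 < sweepWeight h t :=
  sub_pos.2 (prevLevel_lt (pos_of_mem_sweepLevels ht))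

lemma sum_sweepWeight_filter_le (u : V) :
    ∑ t ∈ sweepLevels h with t ≤ h u ^ 2, sweepWeight h t = h u ^ 2 :=
  sum_filter_le_sub_prevLevel_eq (fun _ => pos_of_mem_sweepLevels) (sq_mem_insert_sweepLevels u)

lemma sum_card_sweepSet_mul_sweepWeight :
    ∑ t ∈ sweepLevels h, ((sweepSet h t).card : ℝ) * sweepWeight h t = ∑ u, h u ^ 2 := by
  rw [← sum_congr rfl fun u _ => sum_sweepWeight_filter_le u]
  exact sum_card_filter_mul_eq _ (fun t u => t ≤ h u ^ 2) _

end Sweep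

section SweepCut

variable {V : Type*} [Fintype V] {G : SimpleGraph V} {h g : V → ℝ}

lemma cutMatchNum_sweepSet_le (hh0 : ∀ u, 0 ≤ h u) (hg : IsEdgeCharge G h g) {t : ℝ}
    (ht : t ∈ sweepLevels h) :
    cutMatchNum G (sweepSet h t) ≤
      (chargeAbove h g (prevLevel (sweepLevels h) t)).card + (chargeBelow h g t).card := by
  refine cutMatchNum_le G fun M hcross hdisj => card_le_card_add_card_of_injOn
    (fun p hp q hq hpq => by_contra fun hne => (hdisj p hp q hq hne).1 hpq)
    (fun p hp q hq hpq => by_contra fun hne => (hdisj p hp q hq hne).2.2.2 hpq)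
    fun p hp => ?_
  obtain ⟨hin, hout, hadj⟩ := hcross p hp
  have hta : t ≤ h p.1 ^ 2 := (mem_filter.1 hin).2
  have htb : h p.2 ^ 2 < t := not_le.1 fun h' => hout (mem_filter.2 ⟨mem_univ _, h'⟩)
  have hbs : h p.2 ^ 2 ≤ prevLevel (sweepLevels h) t :=
    le_prevLevel (sq_mem_insert_sweepLevels _) htb
  rcases sweep_edge_dichotomy (hh0 p.1) (prevLevel_lt (pos_of_mem_sweepLevels ht))
    hta hbs (hg _ _ hadj) with hA | hB
  · exact Or.inl (mem_filter.2 ⟨mem_univ _, hA⟩)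
  · exact Or.inr (mem_filter.2 ⟨mem_univ _, hB⟩)

lemma sum_card_chargeAbove_mul_le (hh0 : ∀ u, 0 ≤ h u) :
    ∑ t ∈ sweepLevels h, ((chargeAbove h g (prevLevel (sweepLevels h) t)).card : ℝ) *
      sweepWeight h t ≤ ∑ u, √(8 * g u) * h u := by
  set L := sweepLevels h
  refine (sum_card_filter_mul_eq L (fun t u => prevLevel L t < h u ^ 2 ∧
    (h u ^ 2 - prevLevel L t) ^ 2 ≤ 8 * g u * h u ^ 2) _).trans_le (sum_le_sum fun u _ => ?_)
  refine (sum_sub_prevLevel_le (filter_subset _ L) (a := h u ^ 2)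
    (x := h u ^ 2 - √(8 * g u) * h u)
    (by nlinarith [hh0 u, Real.sqrt_nonneg (8 * g u)]) fun t ht => ?_).trans_eq (by ring)
  obtain ⟨-, habove, hcharge⟩ := mem_filter.1 ht
  refine ⟨not_lt.1 fun hlt => ?_, sub_le_sqrt_mul_of_sq_sub_le (hh0 u) hcharge⟩
  exact habove.not_ge (le_prevLevel (sq_mem_insert_sweepLevels u) hlt)

lemma sum_card_chargeBelow_mul_le (hh0 : ∀ u, 0 ≤ h u) (hg0 : ∀ u, 0 ≤ g u) :
    ∑ t ∈ sweepLevels h, ((chargeBelow h g t).card : ℝ) * sweepWeight h t ≤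
      ∑ u, (2 * (√(8 * g u) * h u) + 8 * g u) := by
  set L := sweepLevels h
  refine (sum_card_filter_mul_eq L (fun t u => h u ^ 2 < t ∧
    (t - h u ^ 2) ^ 2 ≤ 8 * g u * t) _).trans_le (sum_le_sum fun u _ => ?_)
  have hsq : √(8 * g u) ^ 2 = 8 * g u := Real.sq_sqrt (by linarith [hg0 u])
  refine (sum_sub_prevLevel_le (filter_subset _ L) (a := (h u + √(8 * g u)) ^ 2)
    (x := h u ^ 2)
    (by nlinarith [hh0 u, Real.sqrt_nonneg (8 * g u)]) fun t ht => ?_).trans_eq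
    (by rw [add_sq, hsq]; ring)
  obtain ⟨htL, hbelow, hcharge⟩ := mem_filter.1 ht
  exact ⟨le_add_sqrt_sq_of_sq_sub_le (hh0 u) (pos_of_mem_sweepLevels htL).le
    (by linarith [hg0 u]) hcharge, le_prevLevel (sq_mem_insert_sweepLevels u) hbelow⟩

lemma sum_cutMatchNum_sweepSet_mul_le (hh0 : ∀ u, 0 ≤ h u) (hg0 : ∀ u, 0 ≤ g u)
    (hg : IsEdgeCharge G h g) :
    ∑ t ∈ sweepLevels h, (cutMatchNum G (sweepSet h t) : ℝ) * sweepWeight h t ≤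
      3 * (√(8 * ∑ u, g u) * √(∑ u, h u ^ 2)) + 8 * ∑ u, g u := by
  have hcauchy : ∑ u, √(8 * g u) * h u ≤ √(8 * ∑ u, g u) * √(∑ u, h u ^ 2) := by
    refine (Real.sum_mul_le_sqrt_mul_sqrt _ _ _).trans_eq ?_
    rw [sum_congr rfl fun u _ => Real.sq_sqrt (by linarith [hg0 u]), ← mul_sum]
  calc ∑ t ∈ sweepLevels h, (cutMatchNum G (sweepSet h t) : ℝ) * sweepWeight h t
      ≤ ∑ t ∈ sweepLevels h, (((chargeAbove h g (prevLevel (sweepLevels h) t)).card : ℝ) *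
          sweepWeight h t + ((chargeBelow h g t).card : ℝ) * sweepWeight h t) :=
        sum_le_sum fun t ht => by
          rw [← add_mul]
          exact mul_le_mul_of_nonneg_right (by exact_mod_cast cutMatchNum_sweepSet_le hh0 hg ht)
            (sweepWeight_pos ht).le
    _ ≤ ∑ u, √(8 * g u) * h u + ∑ u, (2 * (√(8 * g u) * h u) + 8 * g u) := by
        rw [sum_add_distrib]
        exact add_le_add (sum_card_chargeAbove_mul_le hh0) (sum_card_chargeBelow_mul_le hh0 hg0)
    _ = 3 * ∑ u, √(8 * g u) * h u + 8 * ∑ u, g u := by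
        rw [sum_add_distrib, ← mul_sum, ← mul_sum]; ring
    _ ≤ _ := by linarith

lemma exists_sweepSet_cutMatchNum_div_le (hh0 : ∀ u, 0 ≤ h u) (hg0 : ∀ u, 0 ≤ g u)
    (hg : IsEdgeCharge G h g) {u₀ : V} (hu₀ : h u₀ ≠ 0) :
    ∃ t ∈ sweepLevels h, (cutMatchNum G (sweepSet h t) : ℝ) / (sweepSet h t).card ≤
      3 * √(8 * ((∑ u, g u) / ∑ u, h u ^ 2)) + 8 * ((∑ u, g u) / ∑ u, h u ^ 2) := by
  set H := ∑ u, h u ^ 2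
  set R := 3 * √(8 * ((∑ u, g u) / H)) + 8 * ((∑ u, g u) / H)
  have hH : 0 < H := sum_pos' (fun u _ => sq_nonneg _) ⟨u₀, mem_univ _, by positivity⟩
  have hcancel : (∑ u, g u) / H * H = ∑ u, g u := div_mul_cancel₀ _ hH.ne'
  have hroot : √(8 * ((∑ u, g u) / H)) * H = √(8 * ∑ u, g u) * √H := by
    calc √(8 * ((∑ u, g u) / H)) * H = √(8 * ((∑ u, g u) / H)) * √H * √H := by
          rw [mul_assoc, Real.mul_self_sqrt hH.le]
      _ = √(8 * ∑ u, g u) * √H := by rw [← Real.sqrt_mul' _ hH.le, mul_assoc, hcancel]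
  have hsum : ∑ t ∈ sweepLevels h, (cutMatchNum G (sweepSet h t) : ℝ) * sweepWeight h t ≤ R * H :=
    (sum_cutMatchNum_sweepSet_mul_le hh0 hg0 hg).trans_eq
      (by linear_combination -3 * hroot - 8 * hcancel)
  -- averaging over the levels, weighted by `sweepWeight`
  obtain ⟨t, ht, hle⟩ := exists_le_of_sum_le (sweepLevels_nonempty hu₀)
    (f := fun t => (cutMatchNum G (sweepSet h t) : ℝ) * (sweepWeight h t * H))
    (g := fun t => R * (sweepSet h t).card * (sweepWeight h t * H)) (by
      simp only [← mul_assoc, ← sum_mul]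
      rw [sum_congr rfl fun t _ => mul_assoc R _ _, ← mul_sum, sum_card_sweepSet_mul_sweepWeight]
      exact mul_le_mul_of_nonneg_right hsum hH.le)
  have hcard : (0 : ℝ) < (sweepSet h t).card := by exact_mod_cast (sweepSet_nonempty ht).card_pos
  exact ⟨t, ht, (div_le_iff₀ hcard).2
    (le_of_mul_le_mul_right hle (mul_pos (sweepWeight_pos ht) hH))⟩

end SweepCut

section Relaxation

variable {V : Type*} [Fintype V] (G : SimpleGraph V)

lemma exists_isEdgeCharge_of_ne {a b : V} (hab : a ≠ b) :
    ∃ f g : V → ℝ, ∑ u, f u = 0 ∧ (∃ u, f u ≠ 0) ∧ (∀ u, 0 ≤ g u) ∧ IsEdgeCharge G f g := by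
  set f : V → ℝ := Pi.single a 1 - Pi.single b 1
  refine ⟨f, fun u => 2 * f u ^ 2, by simp [f], ⟨a, by simp [f, hab]⟩, fun _ => by positivity,
    fun u v _ => by nlinarith [sq_nonneg (f u + f v)]⟩

variable {G} {f g : V → ℝ}

lemma matchCond_le_of_isEdgeCharge (hsum : ∑ u, f u = 0) {u₀ : V} (hu₀ : f u₀ ≠ 0)
    (hg0 : ∀ u, 0 ≤ g u) (hf : IsEdgeCharge G f g) :
    matchCond G ≤ 12 * √((∑ u, g u) / ∑ u, f u ^ 2) + 16 * ((∑ u, g u) / ∑ u, f u ^ 2) := by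
  have : Nonempty V := ⟨u₀⟩
  set ρ := (∑ u, g u) / ∑ u, f u ^ 2
  obtain ⟨h, hh0, hsupp, hhalf, hh⟩ := exists_nonneg_of_sum_eq_zero hsum hf
  have hF : 0 < ∑ u, f u ^ 2 := sum_pos' (fun u _ => sq_nonneg _) ⟨u₀, mem_univ _, by positivity⟩
  obtain ⟨u₁, hu₁⟩ : ∃ u, h u ≠ 0 := by
    by_contra! h0
    have : ∑ u, h u ^ 2 = 0 := sum_eq_zero fun u _ => by rw [h0 u]; ring
    linarith
  obtain ⟨t, ht, hcut⟩ := exists_sweepSet_cutMatchNum_div_le hh0 hg0 hh hu₁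
  have hρ : (∑ u, g u) / ∑ u, h u ^ 2 ≤ 2 * ρ := by
    calc (∑ u, g u) / ∑ u, h u ^ 2 ≤ (∑ u, g u) / ((∑ u, f u ^ 2) / 2) :=
          div_le_div_of_nonneg_left (sum_nonneg fun u _ => hg0 u) (by positivity) (by linarith)
      _ = 2 * ρ := by rw [div_div_eq_mul_div, mul_comm, mul_div_assoc]
  have hsqrt : √(8 * (2 * ρ)) = 4 * √ρ := by
    rw [← mul_assoc, Real.sqrt_mul (by norm_num), show (8 * 2 : ℝ) = 4 ^ 2 by norm_num,
      Real.sqrt_sq (by norm_num)]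
  have hcard : 2 * (sweepSet h t).card ≤ Fintype.card V :=
    (Nat.mul_le_mul_left 2 (card_le_card
      (sweepSet_subset_support (pos_of_mem_sweepLevels ht)))).trans hsupp
  calc matchCond G ≤ (cutMatchNum G (sweepSet h t) : ℝ) / (sweepSet h t).card :=
        matchCond_le_div G (sweepSet_nonempty ht) hcard
    _ ≤ 3 * √(8 * (2 * ρ)) + 8 * (2 * ρ) := hcut.trans (by gcongr)
    _ = 12 * √ρ + 16 * ρ := by rw [hsqrt]; ring

lemma sq_matchCond_div_sixteen_le (hpos : 0 < matchCond G) (hsum : ∑ u, f u = 0) {u₀ : V}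
    (hu₀ : f u₀ ≠ 0) (hg0 : ∀ u, 0 ≤ g u) (hf : IsEdgeCharge G f g) :
    (matchCond G / 16) ^ 2 ≤ (∑ u, g u) / ∑ u, f u ^ 2 := by
  have hρ : 0 ≤ (∑ u, g u) / ∑ u, f u ^ 2 :=
    div_nonneg (sum_nonneg fun u _ => hg0 u) (sum_nonneg fun u _ => sq_nonneg _)
  have h16 := le_sixteen_mul_sqrt_of_le_min hρ (matchCond_le_one G)
    (matchCond_le_of_isEdgeCharge hsum hu₀ hg0 hf)
  calc (matchCond G / 16) ^ 2 ≤ √((∑ u, g u) / ∑ u, f u ^ 2) ^ 2 :=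
        pow_le_pow_left₀ (by positivity) (by linarith) 2
    _ = _ := Real.sq_sqrt hρ

end Relaxation

/-- Hard direction of the matching-conductance Cheeger inequality: `Υ*(G) ≤ 16·√(λ*(G))`. -/
theorem matchCond_le_sixteen_mul_sqrt_oneDimGap {V : Type*} [Fintype V] (G : SimpleGraph V)
    (hcard : 2 ≤ Fintype.card V) :
    matchCond G ≤ 16 * Real.sqrt (oneDimGap G) := by
  rcases le_or_gt (matchCond G) 0 with hle | hpos
  · exact hle.trans (by positivity)
  obtain ⟨a, b, hab⟩ := Fintype.exists_pair_of_one_lt_card hcard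
  obtain ⟨f₀, g₀, hsum₀, hne₀, hg₀, hf₀⟩ := exists_isEdgeCharge_of_ne G hab
  have hgap : (matchCond G / 16) ^ 2 ≤ oneDimGap G :=
    le_csInf ⟨_, f₀, g₀, hsum₀, hne₀, hg₀, hf₀, rfl⟩
      fun _ ⟨_, _, hsum, ⟨_, hu⟩, hg0, hf, hr⟩ =>
        hr ▸ sq_matchCond_div_sixteen_le hpos hsum hu hg0 hf
  have := (Real.le_sqrt (by positivity) ((sq_nonneg _).trans hgap)).2 hgap
  linarith
end
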